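/- Let p(z) = ∏_{k=1}^n (z - z_k) and q(z) = ∏_{k∈S}(z - z_k) a monic factor. Then for any u ∈ ℂ, log|q(u)| ≤ (1/(2π)) ∫₀^{2π} log|p(u + e^{iθ})| dθ. -/

import Mathlib

open Real Finset MeasureTheory intervalIntegral

noncomputable def circLog (a : ℂ) (θ : ℝ) : ℝ :=
  Real.log (‖Complex.exp (θ * Complex.I) - a‖)

lemma circLog_periodic (a : ℂ) : Function.Periodic (circLog a) (2 * π) := by
  intro θ
  unfold circLog
  congr 3
  push_cast
  rw [add_mul, Complex.exp_add, Complex.exp_two_pi_mul_I, mul_one]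

lemma measurable_circLog (a : ℂ) : Measurable (circLog a) := by
  apply Real.measurable_log.comp
  exact (continuous_norm.comp
    ((Complex.continuous_exp.comp (Complex.continuous_ofReal.mul continuous_const)).sub
      continuous_const)).measurable

lemma abs_exp_sub_one (θ : ℝ) (h0 : 0 ≤ θ) (h2 : θ ≤ 2 * π) :
    ‖Complex.exp (θ * Complex.I) - 1‖ = 2 * Real.sin (θ / 2) := by
  have hs : 0 ≤ Real.sin (θ / 2) :=
    Real.sin_nonneg_of_nonneg_of_le_pi (by linarith) (by linarith)
  rw [Complex.norm_def, Complex.normSq_apply]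
  have h1 : Real.sin (θ / 2) ^ 2 = 1 / 2 - Real.cos θ / 2 := by
    have := Real.sin_sq_eq_half_sub (θ / 2)
    rwa [show 2 * (θ / 2) = θ by ring] at this
  have h3 := Real.sin_sq_add_cos_sq θ
  rw [show ((Complex.exp (θ*Complex.I) - 1).re) = Real.cos θ - 1 by
        simp [Complex.sub_re, Complex.exp_ofReal_mul_I_re],
      show ((Complex.exp (θ*Complex.I) - 1).im) = Real.sin θ by
        simp [Complex.sub_im, Complex.exp_ofReal_mul_I_im]]
  rw [show (Real.cos θ - 1) * (Real.cos θ - 1) + Real.sin θ * Real.sin θ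
        = (2 * Real.sin (θ/2)) ^ 2 by nlinarith]
  exact Real.sqrt_sq (by linarith)

lemma abs_log_le {θ : ℝ} (h0 : 0 < θ) : |Real.log θ| ≤ 2 * θ ^ (-(1/2) : ℝ) + θ := by
  have hr : (0:ℝ) < θ ^ (-(1/2) : ℝ) := Real.rpow_pos_of_pos h0 _
  have h1 : Real.log θ ≤ θ := Real.log_le_self h0.le
  have h2 : -Real.log θ ≤ 2 * θ ^ (-(1/2) : ℝ) := by
    have := Real.log_rpow h0 (-(1/2) : ℝ)
    have h3 : Real.log (θ ^ (-(1/2) : ℝ)) ≤ θ ^ (-(1/2) : ℝ) := Real.log_le_self hr.le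
    rw [this] at h3
    linarith
  rw [abs_le]
  constructor <;> linarith

lemma circLog_one_int_first : IntervalIntegrable (circLog 1) volume 0 π := by
  have hB : IntervalIntegrable (fun θ : ℝ => 2 * θ ^ (-(1/2) : ℝ) + θ + Real.log π)
      volume 0 π := by
    apply IntervalIntegrable.add
    · exact ((intervalIntegrable_rpow' (by norm_num)).const_mul 2).add
        (continuous_id.intervalIntegrable _ _)
    · exact (continuous_const.intervalIntegrable _ _)
  apply hB.mono_fun' ((measurable_circLog 1).aestronglyMeasurable)
  rw [Filter.EventuallyLE, ae_restrict_iff' measurableSet_uIoc]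
  filter_upwards with θ hθ
  rw [Set.uIoc_of_le Real.pi_pos.le] at hθ
  obtain ⟨h0, h1⟩ := hθ
  have habs : ‖Complex.exp (θ * Complex.I) - 1‖ = 2 * Real.sin (θ / 2) :=
    abs_exp_sub_one θ h0.le (by linarith [Real.pi_pos])
  have hlow : 2 / π * (θ / 2) ≤ Real.sin (θ / 2) :=
    Real.mul_le_sin (by linarith) (by linarith)
  have hπ : (0:ℝ) < π := Real.pi_pos
  have hlow' : θ / π ≤ Real.sin (θ / 2) := by
    calc θ / π = 2 / π * (θ / 2) := by ring
    _ ≤ _ := hlow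
  have hsin : 0 < Real.sin (θ / 2) := lt_of_lt_of_le (by positivity) hlow'
  have hub : circLog 1 θ ≤ Real.log θ := by
    rw [circLog, habs]
    have hupp : Real.sin (θ / 2) ≤ θ / 2 := Real.sin_le (by linarith)
    exact Real.log_le_log (by linarith) (by linarith)
  have hlb : Real.log θ - Real.log π ≤ circLog 1 θ := by
    rw [circLog, habs]
    have : Real.log (θ / π) ≤ Real.log (2 * Real.sin (θ / 2)) := by
      apply Real.log_le_log (by positivity)
      calc θ / π ≤ Real.sin (θ / 2) := hlow'
      _ ≤ 2 * Real.sin (θ / 2) := by linarith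
    rwa [Real.log_div (by linarith) hπ.ne'] at this
  have hπ1 : 0 ≤ Real.log π := Real.log_nonneg (by linarith [Real.pi_gt_three])
  have hlogθ := abs_le.mp (abs_log_le h0)
  simp only [Real.norm_eq_abs]
  rw [abs_le]
  constructor <;> linarith [neg_abs_le (Real.log θ), le_abs_self (Real.log θ)]

lemma circLog_one_reflect (θ : ℝ) : circLog 1 (2 * π - θ) = circLog 1 θ := by
  unfold circLog
  have h1 : Complex.exp ((2 * π - θ : ℝ) * Complex.I)
      = Complex.exp ((-θ : ℝ) * Complex.I) := by
    push_cast
    rw [show ((2:ℂ) * π - θ) * Complex.I = 2 * π * Complex.I + (-θ) * Complex.I by ring,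
      Complex.exp_add, Complex.exp_two_pi_mul_I, one_mul]
  have hconj : Complex.exp ((-θ : ℝ) * Complex.I) - 1
      = (starRingEnd ℂ) (Complex.exp ((θ:ℝ) * Complex.I) - 1) := by
    rw [map_sub, ← Complex.exp_conj]
    push_cast
    simp [Complex.conj_I, mul_comm]
  rw [h1, hconj, Complex.norm_conj]

lemma circLog_one_int_base : IntervalIntegrable (circLog 1) volume 0 (2 * π) := by
  apply circLog_one_int_first.trans
  have h2 := (circLog_one_int_first.comp_sub_left (2 * π)).symm
  simp only [circLog_one_reflect] at h2
  rw [sub_zero] at h2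
  convert h2 using 1
  ring

lemma periodic_intervalIntegrable {f : ℝ → ℝ} {T : ℝ} (hT : 0 < T)
    (hp : Function.Periodic f T) (h : IntervalIntegrable f volume 0 T) (t₁ t₂ : ℝ) :
    IntervalIntegrable f volume t₁ t₂ := by
  have hshift : ∀ n : ℤ, IntervalIntegrable f volume (n * T) (n * T + T) := by
    intro n
    have h2 := h.comp_sub_right (n * T)
    simp only [hp.sub_int_mul_eq] at h2
    rw [zero_add, add_comm T ((n:ℝ) * T)] at h2
    exact h2
  have hup : ∀ n : ℕ, IntervalIntegrable f volume 0 (n * T) := by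
    intro n
    induction n with
    | zero => simpa using IntervalIntegrable.refl (f := f) (μ := volume) (a := 0)
    | succ n ih =>
      have h3 := hshift n
      refine ih.trans ?_
      push_cast at h3 ⊢
      ring_nf at h3 ⊢
      exact h3
  have hdown : ∀ n : ℕ, IntervalIntegrable f volume (-(n * T)) 0 := by
    intro n
    induction n with
    | zero => simpa using IntervalIntegrable.refl (f := f) (μ := volume) (a := 0)
    | succ n ih =>
      refine IntervalIntegrable.trans ?_ ih
      have h3 := hshift (-(n + 1))
      push_cast at h3 ⊢
      ring_nf at h3 ⊢
      exact h3
  obtain ⟨n, hn⟩ := exists_nat_ge (max |t₁| |t₂| / T)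
  have hnT : max |t₁| |t₂| ≤ n * T := by
    rw [div_le_iff₀ hT] at hn
    linarith
  have hmem : ∀ t : ℝ, |t| ≤ max |t₁| |t₂| → t ∈ Set.uIcc (-(n * T)) (n * T) := by
    intro t ht
    rw [Set.uIcc_of_le (by nlinarith [abs_nonneg t₁] : -(n * T) ≤ (n * T : ℝ))]
    rw [abs_le] at ht
    constructor <;> [linarith [ht.1]; linarith [ht.2]]
  exact ((hdown n).trans (hup n)).mono_set
    (Set.uIcc_subset_uIcc (hmem t₁ (le_max_left _ _)) (hmem t₂ (le_max_right _ _)))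

lemma circLog_rot (a : ℂ) (ha : a ≠ 0) (θ : ℝ) :
    circLog a θ = circLog ((‖a‖ : ℝ) : ℂ) (θ - Complex.arg a) := by
  unfold circLog
  have key : Complex.exp ((θ:ℝ) * Complex.I) - a
      = Complex.exp ((Complex.arg a : ℝ) * Complex.I) *
        (Complex.exp (((θ - Complex.arg a : ℝ)) * Complex.I) - (‖a‖ : ℝ)) := by
    rw [mul_sub, ← Complex.exp_add]
    have h1 : ((Complex.arg a : ℝ) : ℂ) * Complex.I + ((θ - Complex.arg a : ℝ) : ℂ) * Complex.I
        = ((θ : ℝ) : ℂ) * Complex.I := by push_cast; ring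
    rw [h1]
    have h2 : Complex.exp ((Complex.arg a : ℝ) * Complex.I) * ((‖a‖ : ℝ) : ℂ) = a := by
      rw [mul_comm]; exact Complex.norm_mul_exp_arg_mul_I a
    rw [h2]
  rw [key, norm_mul, Complex.norm_exp_ofReal_mul_I, one_mul]

lemma circLog_int (a : ℂ) (t₁ t₂ : ℝ) : IntervalIntegrable (circLog a) volume t₁ t₂ := by
  by_cases ha : ‖a‖ = 1
  · have ha0 : a ≠ 0 := by
      intro h; rw [h] at ha; simp at ha
    have h1all := periodic_intervalIntegrable Real.two_pi_pos (circLog_periodic 1)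
      circLog_one_int_base
    have h2 := (h1all (t₁ - Complex.arg a) (t₂ - Complex.arg a)).comp_sub_right (Complex.arg a)
    have hfun : (fun θ => circLog 1 (θ - Complex.arg a)) = circLog a := by
      funext θ
      rw [circLog_rot a ha0 θ, ha]
      norm_num
    rw [hfun] at h2
    convert h2 using 2 <;> ring
  · apply Continuous.intervalIntegrable
    rw [continuous_iff_continuousAt]
    intro θ
    have hne : ‖Complex.exp ((θ:ℝ) * Complex.I) - a‖ ≠ 0 := by
      intro h
      rw [norm_eq_zero, sub_eq_zero] at h
      apply ha
      rw [← h, Complex.norm_exp_ofReal_mul_I]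
    have hc : Continuous (fun θ : ℝ => ‖Complex.exp ((θ:ℂ) * Complex.I) - a‖) :=
      continuous_norm.comp
        ((Complex.continuous_exp.comp (Complex.continuous_ofReal.mul continuous_const)).sub
          continuous_const)
    exact hc.continuousAt.log hne

lemma mean_value {f : ℂ → ℂ} (hf : DiffContOnCl ℂ f (Metric.ball 0 1)) :
    ∫ θ in (0:ℝ)..(2*π), (f (Complex.exp (θ * Complex.I))).re = 2 * π * (f 0).re := by
  have h0 : (0:ℂ) ∈ Metric.ball (0:ℂ) 1 := by simp
  have key := hf.circleIntegral_sub_inv_smul h0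
  have hcm : ∀ θ : ℝ, circleMap 0 1 θ = Complex.exp (θ * Complex.I) := by
    intro θ; simp [circleMap]
  rw [circleIntegral] at key
  have hint : ∀ θ : ℝ, deriv (circleMap 0 1) θ •
      ((circleMap 0 1 θ - 0)⁻¹ • f (circleMap 0 1 θ))
      = Complex.I * f (Complex.exp (θ * Complex.I)) := by
    intro θ
    rw [deriv_circleMap, hcm, sub_zero, smul_eq_mul, smul_eq_mul]
    field_simp [Complex.exp_ne_zero]
  simp only [hint] at key
  rw [intervalIntegral.integral_const_mul] at key
  have hval : (∫ θ in (0:ℝ)..(2*π), f (Complex.exp (θ * Complex.I)))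
      = (2 * π : ℝ) * f 0 := by
    apply mul_left_cancel₀ Complex.I_ne_zero
    rw [key, smul_eq_mul]
    push_cast
    ring
  -- continuity of the integrand
  have hcont : ContinuousOn f (Metric.closedBall (0:ℂ) 1) := by
    have := hf.continuousOn
    rwa [closure_ball (0:ℂ) one_ne_zero] at this
  have hFc : Continuous (fun θ : ℝ => f (Complex.exp (θ * Complex.I))) := by
    apply hcont.comp_continuous
    · exact Complex.continuous_exp.comp (Complex.continuous_ofReal.mul continuous_const)
    · intro θ
      simp [Metric.mem_closedBall, Complex.dist_eq, Complex.norm_exp_ofReal_mul_I]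
  have hre := Complex.reCLM.intervalIntegral_comp_comm
    (hFc.intervalIntegrable (μ := volume) 0 (2*π))
  simp only [Complex.reCLM_apply] at hre
  rw [hre, hval]
  simp

lemma circLog_integral_of_one_lt {r : ℝ} (hr : 1 < r) :
    ∫ θ in (0:ℝ)..(2*π), circLog (r:ℂ) θ = 2 * π * Real.log r := by
  set f : ℂ → ℂ := fun z => Complex.log ((r:ℂ) - z) with hfdef
  have hmem : ∀ z : ℂ, z ∈ Metric.closedBall (0:ℂ) 1 → ((r:ℂ) - z) ∈ Complex.slitPlane := by
    intro z hz
    rw [Complex.mem_slitPlane_iff]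
    left
    have h1 : z.re ≤ ‖z‖ := Complex.re_le_norm z
    have h2 : ‖z‖ ≤ 1 := by
      simpa [Complex.dist_eq] using Metric.mem_closedBall.mp hz
    simp only [Complex.sub_re, Complex.ofReal_re]
    linarith
  have hf : DiffContOnCl ℂ f (Metric.ball 0 1) := by
    constructor
    · intro z hz
      apply DifferentiableAt.differentiableWithinAt
      have hzc : z ∈ Metric.closedBall (0:ℂ) 1 := Metric.ball_subset_closedBall hz
      exact (Complex.differentiableAt_log (hmem z hzc)).comp z
        ((differentiable_const _).sub differentiable_id).differentiableAt
    · rw [closure_ball (0:ℂ) one_ne_zero]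
      intro z hz
      exact (((continuous_const.sub continuous_id).continuousAt).clog
        (hmem z hz)).continuousWithinAt
  have hmv := mean_value hf
  have heq : ∀ θ : ℝ, (f (Complex.exp (θ * Complex.I))).re = circLog (r:ℂ) θ := by
    intro θ
    rw [hfdef]
    simp only [Complex.log_re, circLog]
    rw [norm_sub_rev]
  rw [intervalIntegral.integral_congr (g := circLog (r:ℂ)) (fun θ _ => heq θ)] at hmv
  rw [hmv, hfdef]
  simp only [sub_zero, Complex.log_re]
  rw [Complex.norm_real, Real.norm_eq_abs, abs_of_pos (by linarith)]

lemma circLog_integral_of_lt_one {r : ℝ} (h0 : 0 ≤ r) (hr : r < 1) :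
    ∫ θ in (0:ℝ)..(2*π), circLog (r:ℂ) θ = 0 := by
  set f : ℂ → ℂ := fun z => Complex.log (1 - (r:ℂ) * z) with hfdef
  have hmem : ∀ z : ℂ, z ∈ Metric.closedBall (0:ℂ) 1 → (1 - (r:ℂ) * z) ∈ Complex.slitPlane := by
    intro z hz
    rw [Complex.mem_slitPlane_iff]
    left
    have h1 : |z.re| ≤ ‖z‖ := Complex.abs_re_le_norm z
    have h2 : ‖z‖ ≤ 1 := by
      simpa [Complex.dist_eq] using Metric.mem_closedBall.mp hz
    have h3 : r * z.re ≤ r * 1 := by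
      apply mul_le_mul_of_nonneg_left _ h0
      calc z.re ≤ |z.re| := le_abs_self _
      _ ≤ 1 := h1.trans h2
    simp only [Complex.sub_re, Complex.one_re, Complex.mul_re, Complex.ofReal_re,
      Complex.ofReal_im, zero_mul, sub_zero]
    nlinarith
  have hf : DiffContOnCl ℂ f (Metric.ball 0 1) := by
    constructor
    · intro z hz
      apply DifferentiableAt.differentiableWithinAt
      have hzc : z ∈ Metric.closedBall (0:ℂ) 1 := Metric.ball_subset_closedBall hz
      exact (Complex.differentiableAt_log (hmem z hzc)).comp z
        ((differentiable_const _).sub ((differentiable_const _).mul differentiable_id)).differentiableAt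
    · rw [closure_ball (0:ℂ) one_ne_zero]
      intro z hz
      exact (((continuous_const.sub (continuous_const.mul continuous_id)).continuousAt).clog
        (hmem z hz)).continuousWithinAt
  have hmv := mean_value hf
  have habs : ∀ θ : ℝ, ‖Complex.exp (θ * Complex.I) - (r:ℂ)‖
      = ‖1 - (r:ℂ) * Complex.exp (θ * Complex.I)‖ := by
    intro θ
    rw [Complex.norm_def, Complex.norm_def]
    congr 1
    simp only [Complex.normSq_apply, Complex.sub_re, Complex.sub_im, Complex.one_re,
      Complex.one_im, Complex.mul_re, Complex.mul_im, Complex.ofReal_re, Complex.ofReal_im,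
      Complex.exp_ofReal_mul_I_re, Complex.exp_ofReal_mul_I_im, zero_mul, sub_zero, zero_sub,
      mul_zero, zero_add]
    linear_combination (1 - r^2) * (Real.sin_sq_add_cos_sq θ)
  have heq : ∀ θ : ℝ, (f (Complex.exp (θ * Complex.I))).re = circLog (r:ℂ) θ := by
    intro θ
    rw [hfdef]
    simp only [Complex.log_re, circLog]
    rw [habs θ]
  rw [intervalIntegral.integral_congr (g := circLog (r:ℂ)) (fun θ _ => heq θ)] at hmv
  rw [hmv, hfdef]
  simp

lemma exp_eq_countable (c : ℂ) : Set.Countable {θ : ℝ | Complex.exp (θ * Complex.I) = c} := by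
  by_cases hc : c = 0
  · subst hc
    convert Set.countable_empty
    ext θ
    simp [Complex.exp_ne_zero]
  · apply Set.Countable.mono _
      (Set.countable_range (fun n : ℤ => (Complex.log c).im + n * (2*π)))
    intro θ hθ
    simp only [Set.mem_setOf_eq] at hθ
    have h1 : Complex.exp (θ * Complex.I) = Complex.exp (Complex.log c) := by
      rw [Complex.exp_log hc, hθ]
    rw [Complex.exp_eq_exp_iff_exists_int] at h1
    obtain ⟨n, hn⟩ := h1
    refine ⟨n, ?_⟩
    rw [show (n:ℂ) * (2*(π:ℂ)*Complex.I) = ((n*(2*π) : ℝ) : ℂ) * Complex.I by push_cast; ring]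
      at hn
    have h2 := congrArg Complex.im hn
    simp only [Complex.add_im, Complex.mul_im, Complex.ofReal_re, Complex.ofReal_im,
      Complex.I_re, Complex.I_im, mul_zero, mul_one, zero_mul, add_zero, zero_add] at h2
    push_cast at h2 ⊢
    linarith [h2]

lemma circLog_one_integral : (∫ θ in (0:ℝ)..(2*π), circLog 1 θ) = 0 := by
  set J := ∫ θ in (0:ℝ)..(2*π), circLog 1 θ with hJ
  have hint := circLog_int 1
  have hper := circLog_periodic 1
  have h1 : (∫ θ in (0:ℝ)..(2*π), circLog 1 (2*θ)) = J := by
    rw [intervalIntegral.integral_comp_mul_left (circLog 1) two_ne_zero]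
    rw [show (2:ℝ)*0 = 0 by ring, show (2:ℝ)*(2*π) = 2*π + 2*π by ring]
    rw [← intervalIntegral.integral_add_adjacent_intervals (hint 0 (2*π)) (hint (2*π) (2*π+2*π))]
    rw [hper.intervalIntegral_add_eq (2*π) 0, zero_add]
    rw [← hJ, smul_eq_mul]
    ring
  have h2 : (∫ θ in (0:ℝ)..(2*π), circLog 1 (2*θ))
      = ∫ θ in (0:ℝ)..(2*π), (circLog 1 θ + circLog 1 (θ + π)) := by
    apply intervalIntegral.integral_congr_ae
    have hN : volume ({θ : ℝ | Complex.exp (θ * Complex.I) = 1}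
        ∪ {θ : ℝ | Complex.exp (θ * Complex.I) = -1}) = 0 :=
      measure_union_null ((exp_eq_countable 1).measure_zero _)
        ((exp_eq_countable (-1)).measure_zero _)
    filter_upwards [measure_eq_zero_iff_ae_notMem.mp hN] with θ hθ _
    simp only [Set.mem_union, Set.mem_setOf_eq, not_or] at hθ
    obtain ⟨hθ1, hθ2⟩ := hθ
    have he1 : Complex.exp (θ * Complex.I) - 1 ≠ 0 := sub_ne_zero.mpr hθ1
    have he2 : Complex.exp (θ * Complex.I) + 1 ≠ 0 := by
      intro h
      exact hθ2 (by linear_combination h)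
    have hsq : Complex.exp ((2*θ : ℝ) * Complex.I) - 1
        = (Complex.exp (θ * Complex.I) - 1) * (Complex.exp (θ * Complex.I) + 1) := by
      have : Complex.exp ((2*θ : ℝ) * Complex.I)
          = Complex.exp (θ * Complex.I) * Complex.exp (θ * Complex.I) := by
        rw [← Complex.exp_add]
        congr 1
        push_cast
        ring
      rw [this]
      ring
    have hπ : Complex.exp (((θ + π : ℝ)) * Complex.I) - 1
        = -(Complex.exp (θ * Complex.I) + 1) := by
      push_cast
      rw [add_mul, Complex.exp_add, Complex.exp_pi_mul_I]
      ring
    unfold circLog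
    rw [hsq, norm_mul, Real.log_mul (norm_ne_zero_iff.mpr he1) (norm_ne_zero_iff.mpr he2), hπ, norm_neg]
  have h3 : (∫ θ in (0:ℝ)..(2*π), (circLog 1 θ + circLog 1 (θ + π))) = J + J := by
    have hshift : IntervalIntegrable (fun θ => circLog 1 (θ + π)) volume 0 (2*π) := by
      have := (hint (0+π) (2*π+π)).comp_add_right π
      simpa using this
    rw [intervalIntegral.integral_add (hint 0 (2*π)) hshift]
    congr 1
    rw [intervalIntegral.integral_comp_add_right (circLog 1) π, zero_add,
      show (2*π + π : ℝ) = π + 2*π by ring, hper.intervalIntegral_add_eq π 0, zero_add]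
  have := h1.symm.trans (h2.trans h3)
  linarith

lemma circLog_integral (a : ℂ) :
    (∫ θ in (0:ℝ)..(2*π), circLog a θ) = 2 * π * max (Real.log (‖a‖)) 0 := by
  by_cases ha0 : a = 0
  · subst ha0
    have : ∀ θ : ℝ, circLog 0 θ = 0 := by
      intro θ
      unfold circLog
      rw [sub_zero, Complex.norm_exp_ofReal_mul_I, Real.log_one]
    rw [intervalIntegral.integral_congr (g := fun _ => (0:ℝ)) (fun θ _ => this θ)]
    simp
  · set r := ‖a‖ with hr
    have hrot : (∫ θ in (0:ℝ)..(2*π), circLog a θ)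
        = ∫ θ in (0:ℝ)..(2*π), circLog ((r:ℝ):ℂ) θ := by
      rw [intervalIntegral.integral_congr
        (g := fun θ => circLog ((r:ℝ):ℂ) (θ - Complex.arg a))
        (fun θ _ => circLog_rot a ha0 θ)]
      rw [intervalIntegral.integral_comp_sub_right (circLog ((r:ℝ):ℂ)) (Complex.arg a)]
      rw [zero_sub, show (2*π - Complex.arg a : ℝ) = -Complex.arg a + 2*π by ring,
        (circLog_periodic ((r:ℝ):ℂ)).intervalIntegral_add_eq (-Complex.arg a) 0, zero_add]
    rw [hrot]
    have hrpos : 0 < r := by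
      rw [hr]
      exact norm_pos_iff.mpr ha0
    rcases lt_trichotomy r 1 with h | h | h
    · rw [circLog_integral_of_lt_one hrpos.le h]
      rw [max_eq_right (Real.log_nonpos hrpos.le h.le)]
      ring
    · rw [h]
      push_cast
      rw [circLog_one_integral]
      simp
    · rw [circLog_integral_of_one_lt h, max_eq_left (Real.log_nonneg h.le)]

/-- If `p(z) = ∏ (z - z k)` and `q(z) = ∏_{k ∈ S} (z - z k)` is a monic factor, then
`log |q(u)|` is at most the average of `log |p|` over the unit circle centered at `u`. -/
theorem log_abs_factor_le_circle_average {n : ℕ} (z : Fin n → ℂ) (S : Finset (Fin n))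
    (u : ℂ) :
    Real.log (‖∏ k ∈ S, (u - z k)‖) ≤
      (1 / (2 * π)) * ∫ θ in (0:ℝ)..(2 * π),
        Real.log (‖∏ k : Fin n, (u + Complex.exp (θ * Complex.I) - z k)‖) := by
  have h2π : (0:ℝ) < 2 * π := Real.two_pi_pos
  set a : Fin n → ℂ := fun k => z k - u with ha
  have hInt : ∀ k : Fin n, IntervalIntegrable (circLog (a k)) volume 0 (2*π) :=
    fun k => circLog_int (a k) 0 (2*π)
  have hcong : (∫ θ in (0:ℝ)..(2*π), Real.log (‖∏ k : Fin n,
        (u + Complex.exp (θ * Complex.I) - z k)‖))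
      = ∫ θ in (0:ℝ)..(2*π), ∑ k : Fin n, circLog (a k) θ := by
    apply intervalIntegral.integral_congr_ae
    have hN : volume (⋃ k : Fin n, {θ : ℝ | Complex.exp (θ * Complex.I) = a k}) = 0 :=
      measure_iUnion_null (fun k => (exp_eq_countable (a k)).measure_zero _)
    filter_upwards [measure_eq_zero_iff_ae_notMem.mp hN] with θ hθ _
    simp only [Set.mem_iUnion, Set.mem_setOf_eq, not_exists] at hθ
    have hfact : ∀ k : Fin n, u + Complex.exp (θ * Complex.I) - z k
        = Complex.exp (θ * Complex.I) - a k := by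
      intro k; simp only [ha]; ring
    have hne : ∀ k : Fin n, Complex.exp (θ * Complex.I) - a k ≠ 0 :=
      fun k => sub_ne_zero.mpr (hθ k)
    rw [show (∏ k : Fin n, (u + Complex.exp (θ * Complex.I) - z k))
        = ∏ k : Fin n, (Complex.exp (θ * Complex.I) - a k) from
      Finset.prod_congr rfl (fun k _ => hfact k)]
    rw [norm_prod, Real.log_prod (fun k _ => norm_ne_zero_iff.mpr (hne k))]
    rfl
  have hRHS : (∫ θ in (0:ℝ)..(2*π), Real.log (‖∏ k : Fin n,
        (u + Complex.exp (θ * Complex.I) - z k)‖))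
      = ∑ k : Fin n, (2 * π * max (Real.log (‖a k‖)) 0) := by
    rw [hcong, intervalIntegral.integral_finset_sum (fun k _ => hInt k)]
    exact Finset.sum_congr rfl (fun k _ => circLog_integral (a k))
  rw [hRHS]
  have hsimp : (1 / (2*π)) * ∑ k : Fin n, (2 * π * max (Real.log (‖a k‖)) 0)
      = ∑ k : Fin n, max (Real.log (‖a k‖)) 0 := by
    rw [Finset.mul_sum]
    refine Finset.sum_congr rfl (fun k _ => ?_)
    field_simp
  rw [hsimp]
  have habs : ∀ k : Fin n, ‖u - z k‖ = ‖a k‖ := by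
    intro k
    simp only [ha]
    exact (norm_sub_rev u (z k)).trans rfl
  have hbound : Real.log (‖∏ k ∈ S, (u - z k)‖)
      ≤ ∑ k ∈ S, max (Real.log (‖a k‖)) 0 := by
    by_cases hz : ∀ k ∈ S, u - z k ≠ 0
    · rw [norm_prod, Real.log_prod (fun k hk => norm_ne_zero_iff.mpr (hz k hk))]
      refine Finset.sum_le_sum (fun k _ => ?_)
      rw [habs k]
      exact le_max_left _ _
    · push_neg at hz
      obtain ⟨k0, hk0, hzero⟩ := hz
      rw [Finset.prod_eq_zero hk0 hzero, norm_zero, Real.log_zero]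
      exact Finset.sum_nonneg (fun k _ => le_max_right _ _)
  refine hbound.trans ?_
  exact Finset.sum_le_sum_of_subset_of_nonneg (Finset.subset_univ S)
    (fun k _ _ => le_max_right _ _)
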